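/- arXiv:1703.02152 — 2 statements merged into one kernel-verified Lean document; each statement's English description precedes it below -/
import Mathlib

section
/- Let F be a Schwartz function on ℝ whose Fourier transform is supported in [−1,1] and with F(0) = 0. Then the function G(x) = F(x)/x (extended by G(0) = F′(0)) is a Schwartz function whose Fourier transform is also supported in [−1,1]. -/
/-!
The primitive `P ξ = ∫_{-∞}^ξ 𝓕 F` of `𝓕 F` vanishes to the left of `[-1, 1]` trivially and to the
right because `∫ 𝓕 F = F 0 = 0`; being smooth with compact support, it is a Schwartz function. On
the inverse Fourier side differentiation becomes multiplication by `-2πi x`, so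
`G = -2πi 𝓕⁻ P` satisfies `x G(x) = 𝓕⁻ (P') x = F x`, while `𝓕 G = -2πi P` vanishes off `[-1, 1]`.
-/

open MeasureTheory Set Complex Real
open scoped FourierTransform ContDiff LineDeriv SchwartzMap

section

variable {E : Type*} [NormedAddCommGroup E] [NormedSpace ℝ E] {f : ℝ → E}

theorem hasDerivAt_integral_Iic [CompleteSpace E] (hf : Integrable f) (hc : Continuous f)
    (x : ℝ) : HasDerivAt (fun ξ => ∫ t in Iic ξ, f t) (f x) x := by
  have hsplit : (fun ξ => ∫ t in Iic ξ, f t) = fun ξ => (∫ t in Iic x, f t) + ∫ t in x..ξ, f t := by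
    funext ξ
    rw [← intervalIntegral.integral_Iic_sub_Iic hf.integrableOn hf.integrableOn, add_sub_cancel]
  rw [hsplit]
  exact (hc.integral_hasStrictDerivAt x x).hasDerivAt.const_add _

theorem setIntegral_Iic_eq_zero_of_notMem_Icc {a b : ℝ} (hf : Integrable f)
    (hsupp : ∀ t ∉ Icc a b, f t = 0) (hint : ∫ t, f t = 0) {ξ : ℝ} (hξ : ξ ∉ Icc a b) :
    ∫ t in Iic ξ, f t = 0 := by
  rcases not_and_or.1 hξ with hξa | hξb
  · exact setIntegral_eq_zero_of_forall_eq_zero fun t ht =>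
      hsupp t fun htab => hξa (htab.1.trans ht)
  · have hIoi : ∫ t in Ioi ξ, f t = 0 :=
      setIntegral_eq_zero_of_forall_eq_zero fun t ht =>
        hsupp t fun htab => hξb (ht.le.trans htab.2)
    rwa [← intervalIntegral.integral_Iic_add_Ioi hf.integrableOn hf.integrableOn, hIoi,
      add_zero] at hint

theorem hasDerivAt_id_smul_zero {g : ℝ → E} (hg : DifferentiableAt ℝ g 0) :
    HasDerivAt (fun x => x • g x) (g 0) 0 :=
  ((hasDerivAt_id' (0 : ℝ)).smul hg.hasDerivAt).congr_deriv (by simp)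

end

namespace SchwartzMap

section Primitive

variable {E : Type*} [NormedAddCommGroup E] [NormedSpace ℝ E] [CompleteSpace E]

theorem exists_lineDerivOp_eq_of_integral_eq_zero {a b : ℝ} (f : 𝓢(ℝ, E))
    (hsupp : ∀ t ∉ Icc a b, f t = 0) (hint : ∫ t, f t = 0) :
    ∃ P : 𝓢(ℝ, E), ∂_{(1 : ℝ)} P = f ∧ ∀ ξ ∉ Icc a b, P ξ = 0 := by
  set P : ℝ → E := fun ξ => ∫ t in Iic ξ, f t
  have hderiv (x : ℝ) : HasDerivAt P (f x) x :=
    hasDerivAt_integral_Iic f.integrable f.continuous x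
  have hsmooth : ContDiff ℝ ∞ P := by
    refine contDiff_infty_iff_deriv.2 ⟨fun x => (hderiv x).differentiableAt, ?_⟩
    rw [show deriv P = f from funext fun x => (hderiv x).deriv]
    exact f.smooth ⊤
  have hPsupp (ξ : ℝ) (hξ : ξ ∉ Icc a b) : P ξ = 0 :=
    setIntegral_Iic_eq_zero_of_notMem_Icc f.integrable hsupp hint hξ
  refine ⟨(HasCompactSupport.intro isCompact_Icc hPsupp).toSchwartzMap hsmooth, ?_, hPsupp⟩
  ext x
  rw [lineDerivOp_apply_eq_fderiv]
  change fderiv ℝ P x 1 = f x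
  simp [(hderiv x).hasFDerivAt.fderiv]

end Primitive

variable {E : Type*} [NormedAddCommGroup E] [NormedSpace ℂ E]

theorem integral_fourier_eq [CompleteSpace E] (f : 𝓢(ℝ, E)) : ∫ ξ, 𝓕 f ξ = f 0 := by
  calc ∫ ξ, 𝓕 f ξ
      = 𝓕⁻ (𝓕 f) 0 := by rw [fourierInv_coe, Real.fourierInv_eq]; simp
    _ = f 0 := by rw [FourierTransform.fourierInv_fourier_eq]

theorem fourierInv_lineDerivOp_one_apply (P : 𝓢(ℝ, E)) (x : ℝ) :
    𝓕⁻ (∂_{(1 : ℝ)} P) x = x • (-(2 * π * I) • 𝓕⁻ P) x := by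
  have : (inner ℝ · (1 : ℝ)).HasTemperateGrowth := by fun_prop
  rw [fourierInv_lineDerivOp_eq, smul_apply, smulLeftCLM_apply_apply this]
  simp [smul_comm (x : ℝ)]

end SchwartzMap

/-- Paley–Wiener type statement: if `F` is Schwartz with Fourier transform supported in
`[-1,1]` and `F(0) = 0`, then `G(x) = F(x)/x` (with `G(0) = F'(0)`) is Schwartz with
Fourier transform supported in `[-1,1]`. -/
theorem stmt7 (F : SchwartzMap ℝ ℂ) (h0 : F 0 = 0)
    (hsupp : ∀ ξ : ℝ, ξ ∉ Set.Icc (-1 : ℝ) 1 → 𝓕 (fun x => F x) ξ = 0) :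
    ∃ G : SchwartzMap ℝ ℂ, (∀ x : ℝ, x ≠ 0 → G x = F x / (x : ℂ)) ∧
      G 0 = deriv (fun x : ℝ => F x) 0 ∧
      ∀ ξ : ℝ, ξ ∉ Set.Icc (-1 : ℝ) 1 → 𝓕 (fun x => G x) ξ = 0 := by
  obtain ⟨P, hP, hPsupp⟩ := SchwartzMap.exists_lineDerivOp_eq_of_integral_eq_zero (𝓕 F) hsupp
    ((SchwartzMap.integral_fourier_eq F).trans h0)
  set G : 𝓢(ℝ, ℂ) := -(2 * π * I) • 𝓕⁻ P
  have hmul (x : ℝ) : x • G x = F x := by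
    rw [← SchwartzMap.fourierInv_lineDerivOp_one_apply, hP, FourierTransform.fourierInv_fourier_eq]
  have hF : (fun x : ℝ => F x) = fun x => x • G x := funext fun x => (hmul x).symm
  refine ⟨G, fun x hx => ?_, ?_, fun ξ hξ => ?_⟩
  · rw [← hmul, Complex.real_smul, mul_div_cancel_left₀ _ (Complex.ofReal_ne_zero.2 hx)]
  · rw [hF, (hasDerivAt_id_smul_zero G.differentiableAt).deriv]
  · change 𝓕 G ξ = 0
    simp [G, hPsupp ξ hξ]
end

section
/- Let (X,d,μ) be a doubling metric measure space satisfying (D_Q) with Q ≥ 2. Let E be a bounded Borel set contained in a ball B = B(x,r) with x ∈ E and r > diam(E), and fix p ∈ (2Q/(Q+2), Q). Then for every y ∈ B, Σ_{j ≤ [log₂ r]} 2^j (⨍_{B(y,2^j)} χ_E^p dμ)^{1/p} ≤ C · (r / μ(B)^{1/Q}) · μ(E)^{1/Q}, where C depends only on p, Q and the doubling constants. -/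
open MeasureTheory Metric Set

/-!
Write `δ = μ E / μ B` and `t = r δ^(1/Q)`. Each term is at most `2^j`, because the averaged
quantity is a ratio at most `1`. When `2^j ≤ r`, applying `(D_Q)` to `B(x,r) ⊆ B(y,2r)` bounds
the ratio by `C_Q 2^Q (t/2^j)^Q`, so the term is at most `(C_Q 2^Q)^(1/p) 2^j (t/2^j)^(Q/p)`.
Using the first bound for `2^j ≤ t` and the second for `2^j > t`, both halves of the sum are
geometric (the second because `Q/p > 1`) and add up to a multiple of
`t = r μ(B)^(-1/Q) μ(E)^(1/Q)`.
-/

theorem Finset.sum_zpow_le_of_forall_le {q : ℝ} (hq₀ : 0 < q) (hq₁ : q < 1) {a : ℤ}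
    {s : Finset ℤ} (hs : ∀ j ∈ s, a ≤ j) : ∑ j ∈ s, q ^ j ≤ q ^ a / (1 - q) := by
  have hshift : ∀ j ∈ s, q ^ j = q ^ a * q ^ (j - a).toNat := by
    intro j hj
    rw [← zpow_natCast, Int.toNat_of_nonneg (sub_nonneg.2 (hs j hj)), ← zpow_add₀ hq₀.ne',
      add_sub_cancel]
  have hinj : Set.InjOn (fun j : ℤ => (j - a).toNat) s := fun i hi j hj hij => by
    have := hs i hi; have := hs j hj; simp only at hij; omega
  calc ∑ j ∈ s, q ^ j = q ^ a * ∑ n ∈ s.image (fun j => (j - a).toNat), q ^ n := by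
        rw [Finset.sum_image hinj, Finset.mul_sum]; exact Finset.sum_congr rfl hshift
    _ ≤ q ^ a * ∑' n : ℕ, q ^ n := by
        gcongr
        exact (summable_geometric_of_lt_one hq₀.le hq₁).sum_le_tsum _ fun n _ => by positivity
    _ = q ^ a / (1 - q) := by rw [tsum_geometric_of_lt_one hq₀.le hq₁, div_eq_mul_inv]

theorem Finset.sum_two_zpow_le_of_forall_le {a : ℤ} {s : Finset ℤ} (hs : ∀ j ∈ s, j ≤ a) :
    ∑ j ∈ s, (2 : ℝ) ^ j ≤ 2 ^ (a + 1) := by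
  have h := Finset.sum_zpow_le_of_forall_le (q := 2⁻¹) (by norm_num) (by norm_num) (a := -a)
    (s := s.map (Equiv.neg ℤ).toEmbedding) (by simpa using fun j hj => neg_le.1 (hs _ hj))
  rw [Finset.sum_map] at h
  convert h using 1
  · simp
  · rw [zpow_add₀ two_ne_zero, inv_zpow', neg_neg]; norm_num; ring

theorem two_zpow_mul_div_rpow_eq (j : ℤ) {t : ℝ} (ht : 0 ≤ t) (β : ℝ) :
    (2 : ℝ) ^ j * (t / 2 ^ j) ^ β = t ^ β * ((2 : ℝ) ^ (1 - β)) ^ j := by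
  rw [← Real.rpow_intCast, Real.div_rpow ht (by positivity), ← Real.rpow_mul zero_le_two,
    ← Real.rpow_mul_intCast zero_le_two, show (1 - β) * j = j - j * β by ring,
    Real.rpow_sub two_pos]
  ring

theorem Finset.sum_le_of_le_two_zpow_of_le_decay {f : ℤ → ℝ} {s : Finset ℤ} {K t β : ℝ}
    (hK : 0 ≤ K) (ht : 0 ≤ t) (hβ : 1 < β) (hsmall : ∀ j ∈ s, f j ≤ 2 ^ j)
    (hlarge : ∀ j ∈ s, f j ≤ K * 2 ^ j * (t / 2 ^ j) ^ β) :
    ∑ j ∈ s, f j ≤ (2 + K / (1 - 2 ^ (1 - β))) * t := by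
  rcases ht.eq_or_lt with rfl | ht
  · refine (Finset.sum_nonpos fun j hj => ?_).trans_eq (mul_zero _).symm
    simpa [Real.zero_rpow (by linarith : β ≠ 0)] using hlarge j hj
  set j₀ := Int.log 2 t
  have hj₀ : (2 : ℝ) ^ j₀ ≤ t := by simpa using Int.zpow_log_le_self one_lt_two ht
  have hj₀' : t < 2 ^ (j₀ + 1) := by simpa using Int.lt_zpow_succ_log_self one_lt_two t
  set q : ℝ := 2 ^ (1 - β)
  have hq₀ : 0 < q := by positivity
  have hq₁ : q < 1 := Real.rpow_lt_one_of_one_lt_of_neg one_lt_two (by linarith)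
  have hfirst : t ^ β * q ^ (j₀ + 1) ≤ t := by
    rw [← two_zpow_mul_div_rpow_eq _ ht.le]
    have hpos : 0 < t / 2 ^ (j₀ + 1) := by positivity
    calc (2 : ℝ) ^ (j₀ + 1) * (t / 2 ^ (j₀ + 1)) ^ β
        ≤ 2 ^ (j₀ + 1) * (t / 2 ^ (j₀ + 1)) ^ (1 : ℝ) := by
          refine mul_le_mul_of_nonneg_left ?_ (by positivity)
          exact Real.rpow_le_rpow_of_exponent_ge hpos
            ((div_le_one (by positivity)).2 hj₀'.le) hβ.le
      _ = t := by rw [Real.rpow_one, mul_div_cancel₀ _ (by positivity)]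
  rw [← Finset.sum_filter_add_sum_filter_not s (· ≤ j₀)]
  calc ∑ j ∈ s with j ≤ j₀, f j + ∑ j ∈ s with ¬j ≤ j₀, f j
      ≤ ∑ j ∈ s with j ≤ j₀, (2 : ℝ) ^ j +
          K * t ^ β * ∑ j ∈ s with ¬j ≤ j₀, q ^ j := by
        rw [Finset.mul_sum]
        gcongr with j hj j hj
        · exact hsmall j (Finset.mem_filter.1 hj).1
        · rw [mul_assoc, ← two_zpow_mul_div_rpow_eq _ ht.le, ← mul_assoc]
          exact hlarge j (Finset.mem_filter.1 hj).1
    _ ≤ 2 ^ (j₀ + 1) + K * t ^ β * (q ^ (j₀ + 1) / (1 - q)) := by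
        gcongr
        · exact Finset.sum_two_zpow_le_of_forall_le fun j hj => (Finset.mem_filter.1 hj).2
        · exact Finset.sum_zpow_le_of_forall_le hq₀ hq₁ fun j hj => by
            have := (Finset.mem_filter.1 hj).2; omega
    _ ≤ 2 * t + K * (t / (1 - q)) := by
        rw [zpow_add_one₀ two_ne_zero, mul_comm _ (2 : ℝ), mul_assoc K, ← mul_div_assoc]
        gcongr
    _ = (2 + K / (1 - q)) * t := by ring

theorem tsum_subtype_le_of_le_two_zpow_of_le_decay {P : ℤ → Prop} {f : ℤ → ℝ}
    {K t β : ℝ} (hK : 0 ≤ K) (ht : 0 ≤ t) (hβ : 1 < β) (hsmall : ∀ j, P j → f j ≤ 2 ^ j)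
    (hlarge : ∀ j, P j → f j ≤ K * 2 ^ j * (t / 2 ^ j) ^ β) :
    ∑' j : {j // P j}, f j ≤ (2 + K / (1 - 2 ^ (1 - β))) * t := by
  have hq : (2 : ℝ) ^ (1 - β) < 1 := Real.rpow_lt_one_of_one_lt_of_neg one_lt_two (by linarith)
  refine tsum_le_of_sum_le' (mul_nonneg (by have := sub_pos.2 hq; positivity) ht) fun u => ?_
  have hP : ∀ j ∈ u.map (Function.Embedding.subtype P), P j := by
    simp only [Finset.mem_map, Function.Embedding.coe_subtype]
    rintro _ ⟨j, -, rfl⟩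
    exact j.2
  exact (Finset.sum_map u (Function.Embedding.subtype P) f).symm.trans_le <|
    Finset.sum_le_of_le_two_zpow_of_le_decay hK ht hβ (fun j hj => hsmall j (hP j hj))
      fun j hj => hlarge j (hP j hj)

theorem two_zpow_le_of_le_floor_logb {r : ℝ} (hr : 0 < r) {j : ℤ}
    (hj : j ≤ ⌊Real.logb 2 r⌋) : (2 : ℝ) ^ j ≤ r := by
  have h := (Int.zpow_le_iff_le_log (R := ℝ) (b := 2) (x := j) one_lt_two hr).2
  rw [← Real.floor_logb_natCast hr.le] at h
  exact_mod_cast h (by exact_mod_cast hj)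

theorem toReal_measure_inter_div_le_one {X : Type*} [MeasurableSpace X] (μ : Measure X)
    (E U : Set X) : (μ (E ∩ U)).toReal / (μ U).toReal ≤ 1 := by
  by_cases hU : μ U = ⊤
  · simp [hU]
  · exact div_le_one_of_le₀ (ENNReal.toReal_mono hU (measure_mono inter_subset_right))
      ENNReal.toReal_nonneg

section DQ

variable {X : Type*} [PseudoMetricSpace X] [MeasurableSpace X] {μ : Measure X} {Q C_Q : ℝ}
  (hDQ : ∀ (x : X) (r R : ℝ), 0 < r → r < R →
    (μ (ball x R)).toReal ≤ C_Q * (R / r) ^ Q * (μ (ball x r)).toReal)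
include hDQ

theorem toReal_measure_ball_le_of_DQ {x y : X} {r s : ℝ} (hy : y ∈ ball x r) (hs : 0 < s)
    (hsr : s ≤ r) (hfin : μ (ball y (2 * r)) ≠ ⊤) :
    (μ (ball x r)).toReal ≤ C_Q * (2 * r / s) ^ Q * (μ (ball y s)).toReal := by
  rw [mem_ball, dist_comm] at hy
  exact (ENNReal.toReal_mono hfin (measure_mono (ball_subset_ball' (by linarith)))).trans
    (hDQ y s (2 * r) hs (by linarith))

variable (hV : ∀ (x : X) (r : ℝ), 0 < r → 0 < (μ (ball x r)).toReal)
include hV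

theorem density_le_of_DQ {E : Set X} {x y : X} {r s : ℝ} (hE : E ⊆ ball x r)
    (hy : y ∈ ball x r) (hs : 0 < s) (hsr : s ≤ r) :
    (μ (E ∩ ball y s)).toReal / (μ (ball y s)).toReal
      ≤ C_Q * (2 * r / s) ^ Q * ((μ E).toReal / (μ (ball x r)).toReal) := by
  have hr := pos_of_mem_ball hy
  have hfin : ∀ z ρ, 0 < ρ → μ (ball z ρ) ≠ ⊤ := fun z ρ hρ =>
    (ENNReal.toReal_pos_iff.1 (hV z ρ hρ)).2.ne
  have hnum : (μ (E ∩ ball y s)).toReal ≤ (μ E).toReal :=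
    ENNReal.toReal_mono (ne_top_of_le_ne_top (hfin x r hr) (measure_mono hE))
      (measure_mono inter_subset_left)
  have hden := toReal_measure_ball_le_of_DQ hDQ hy hs hsr (hfin y _ (by linarith))
  have hVr := hV x r hr
  rw [div_le_iff₀ (hV y s hs)]
  calc (μ (E ∩ ball y s)).toReal
      ≤ (μ E).toReal / (μ (ball x r)).toReal * (μ (ball x r)).toReal := by
        rwa [div_mul_cancel₀ _ hVr.ne']
    _ ≤ (μ E).toReal / (μ (ball x r)).toReal *
          (C_Q * (2 * r / s) ^ Q * (μ (ball y s)).toReal) := by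
        gcongr
    _ = _ := by ring

theorem mul_density_rpow_le_of_DQ (hCQ : 0 ≤ C_Q) (hQ : Q ≠ 0) {p : ℝ} (hp : 0 ≤ p)
    {E : Set X} {x y : X} {r s : ℝ} (hE : E ⊆ ball x r) (hy : y ∈ ball x r) (hs : 0 < s)
    (hsr : s ≤ r) :
    s * ((μ (E ∩ ball y s)).toReal / (μ (ball y s)).toReal) ^ (1 / p)
      ≤ (C_Q * 2 ^ Q) ^ (1 / p) * s *
        (r * ((μ E).toReal / (μ (ball x r)).toReal) ^ (1 / Q) / s) ^ (Q / p) := by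
  have hr := pos_of_mem_ball hy
  set δ := (μ E).toReal / (μ (ball x r)).toReal
  have hδ : 0 ≤ δ := by positivity
  have hscale : C_Q * (2 * r / s) ^ Q * δ = C_Q * 2 ^ Q * (r * δ ^ (1 / Q) / s) ^ Q := by
    rw [mul_div_right_comm r, Real.mul_rpow (by positivity) (by positivity), one_div,
      Real.rpow_inv_rpow hδ hQ, mul_div_assoc, Real.mul_rpow zero_le_two (by positivity)]
    ring
  calc s * ((μ (E ∩ ball y s)).toReal / (μ (ball y s)).toReal) ^ (1 / p)
      ≤ s * (C_Q * (2 * r / s) ^ Q * δ) ^ (1 / p) := by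
        gcongr
        exact density_le_of_DQ hDQ hV hE hy hs hsr
    _ = (C_Q * 2 ^ Q) ^ (1 / p) * s * (r * δ ^ (1 / Q) / s) ^ (Q / p) := by
        rw [hscale, Real.mul_rpow (by positivity) (by positivity),
          ← Real.rpow_mul (by positivity), mul_one_div]
        ring

end DQ

/-- Potential estimate for characteristic functions: on a space satisfying `(D_Q)`,
`Q ≥ 2`, for `p ∈ (2Q/(Q+2), Q)`, every bounded Borel set `E ⊆ B(x,r)` with `x ∈ E` and
`r > diam E`, and every `y ∈ B(x,r)`,
`Σ_{j ≤ ⌊log₂ r⌋} 2^j (⨍_{B(y,2^j)} χ_E^p)^{1/p} ≤ C r μ(B)^{-1/Q} μ(E)^{1/Q}`. -/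
theorem stmt18 {X : Type*} [MetricSpace X] [MeasurableSpace X]
    (μ : Measure X)
    (hV : ∀ (x : X) (r : ℝ), 0 < r → 0 < (μ (ball x r)).toReal)
    (Q C_Q : ℝ) (hQ : 2 ≤ Q) (hCQ : 0 < C_Q)
    (hDQ : ∀ (x : X) (r R : ℝ), 0 < r → r < R →
      (μ (ball x R)).toReal ≤ C_Q * (R / r) ^ Q * (μ (ball x r)).toReal)
    (p : ℝ) (hp₁ : 2 * Q / (Q + 2) < p) (hp₂ : p < Q) :
    ∃ C > (0 : ℝ), ∀ (E : Set X), MeasurableSet E → Bornology.IsBounded E →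
      E.Nonempty → ∀ (x : X) (r : ℝ), x ∈ E → E ⊆ ball x r → EMetric.diam E < ENNReal.ofReal r →
      ∀ y ∈ ball x r,
        (∑' j : {j : ℤ // j ≤ ⌊Real.logb 2 r⌋},
            (2 : ℝ) ^ (j : ℤ) *
              ((μ (E ∩ ball y ((2 : ℝ) ^ (j : ℤ)))).toReal /
                (μ (ball y ((2 : ℝ) ^ (j : ℤ)))).toReal) ^ (1 / p))
          ≤ C * (r / (μ (ball x r)).toReal ^ (1 / Q)) * (μ E).toReal ^ (1 / Q) := by
  have hQ₀ : 0 < Q := by linarith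
  have hp : 0 < p := lt_trans (by positivity) hp₁
  have hβ : 1 < Q / p := (one_lt_div hp).2 hp₂
  have hq : (2 : ℝ) ^ (1 - Q / p) < 1 :=
    Real.rpow_lt_one_of_one_lt_of_neg one_lt_two (by linarith)
  refine ⟨2 + (C_Q * 2 ^ Q) ^ (1 / p) / (1 - 2 ^ (1 - Q / p)),
    by have := sub_pos.2 hq; positivity, ?_⟩
  intro E _ _ _ x r _ hE _ y hy
  have hr := pos_of_mem_ball hy
  have hsmall : ∀ j : ℤ, (2 : ℝ) ^ j *
      ((μ (E ∩ ball y (2 ^ j))).toReal / (μ (ball y (2 ^ j))).toReal) ^ (1 / p) ≤ 2 ^ j :=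
    fun j => mul_le_of_le_one_right (by positivity)
      (Real.rpow_le_one (by positivity) (toReal_measure_inter_div_le_one μ _ _) (by positivity))
  have hlarge := fun j (hj : j ≤ ⌊Real.logb 2 r⌋) => mul_density_rpow_le_of_DQ hDQ hV hCQ.le
    hQ₀.ne' hp.le hE hy (by positivity) (two_zpow_le_of_le_floor_logb hr hj)
  refine (tsum_subtype_le_of_le_two_zpow_of_le_decay (by positivity) (by positivity) hβ
    (fun j _ => hsmall j) hlarge).trans_eq ?_
  rw [Real.div_rpow (by positivity) (by positivity)]
  ring
end
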